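/- arXiv:2511.11588 — 2 statements merged into one kernel-verified Lean document; each statement's English description precedes it below -/
import Mathlib

section
/- Let H, K, G be complex Hilbert spaces, A : H → K and C : G → K bounded operators, and λ > 0 such that CC* ≤ λ AA* (i.e., ⟨CC*z, z⟩ ≤ λ ⟨AA*z, z⟩ for all z ∈ K). Then for every ε > 0 the operator X_ε := A*(AA* + εI)⁻¹ C : G → H satisfies ‖X_ε‖ ≤ √λ. -/
/-!
Put `T = AA* + ε` and, for `g ∈ G`, `u = T⁻¹ C g`. Then
`‖A* u‖² ≤ ‖A* u‖² + ε ‖u‖² = re ⟪T u, u⟫ = re ⟪g, C* u⟫ ≤ ‖g‖ ‖C* u‖ ≤ √λ ‖g‖ ‖A* u‖`,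
the last step being the majorization `‖C* u‖² ≤ λ ‖A* u‖²`; cancelling `‖A* u‖` gives
`‖X_ε g‖ = ‖A* u‖ ≤ √λ ‖g‖`.
-/

open RCLike
open scoped InnerProductSpace InnerProduct

namespace ContinuousLinearMap

variable {𝕜 E F G : Type*} [RCLike 𝕜]
  [NormedAddCommGroup E] [InnerProductSpace 𝕜 E] [CompleteSpace E]
  [NormedAddCommGroup F] [InnerProductSpace 𝕜 F] [CompleteSpace F]
  [NormedAddCommGroup G] [InnerProductSpace 𝕜 G] [CompleteSpace G]

theorem re_inner_comp_adjoint_apply_self (A : E →L[𝕜] F) (z : F) :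
    re ⟪(A ∘L A†) z, z⟫_𝕜 = ‖(A†) z‖ ^ 2 := by
  simpa only [adjoint_adjoint] using (apply_norm_sq_eq_inner_adjoint_left (A†) z).symm

theorem IsPositive.isUnit_add_smul_one {f : E →L[𝕜] E} (hf : f.IsPositive) {ε : ℝ}
    (hε : 0 < ε) : IsUnit (f + (ε : 𝕜) • (1 : E →L[𝕜] E)) := by
  refine isUnit_of_forall_le_norm_inner_map _ (c := ⟨ε, hε.le⟩) hε fun x ↦ ?_
  calc ‖x‖ ^ 2 * ε = re ⟪((ε : 𝕜) • (1 : E →L[𝕜] E)) x, x⟫_𝕜 := by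
        rw [smul_apply, one_apply_eq_self, inner_smul_left, conj_ofReal, re_ofReal_mul,
          inner_self_eq_norm_sq, mul_comm]
    _ ≤ re ⟪(f + (ε : 𝕜) • (1 : E →L[𝕜] E)) x, x⟫_𝕜 := by
        simpa only [add_apply, inner_add_left, map_add, le_add_iff_nonneg_left]
          using hf.re_inner_nonneg_left x
    _ ≤ ‖⟪(f + (ε : 𝕜) • (1 : E →L[𝕜] E)) x, x⟫_𝕜‖ := re_le_norm _

theorem norm_adjoint_apply_le_sqrt_mul {A : E →L[𝕜] F} {C : G →L[𝕜] F} {c : ℝ}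
    (hmaj : ∀ z, re ⟪(C ∘L C†) z, z⟫_𝕜 ≤ c * re ⟪(A ∘L A†) z, z⟫_𝕜) (z : F) :
    ‖(C†) z‖ ≤ √c * ‖(A†) z‖ := by
  have hsq : ‖(C†) z‖ ^ 2 ≤ c * ‖(A†) z‖ ^ 2 := by
    simpa only [re_inner_comp_adjoint_apply_self] using hmaj z
  calc ‖(C†) z‖ = √(‖(C†) z‖ ^ 2) := (Real.sqrt_sq (norm_nonneg _)).symm
    _ ≤ √(c * ‖(A†) z‖ ^ 2) := Real.sqrt_le_sqrt hsq
    _ = √c * ‖(A†) z‖ := by rw [Real.sqrt_mul' _ (sq_nonneg _), Real.sqrt_sq (norm_nonneg _)]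

theorem norm_adjoint_le_of_add_smul_one_apply_eq {A : E →L[𝕜] F} {C : G →L[𝕜] F} {c : ℝ}
    (hc : 0 ≤ c) (hmaj : ∀ z, ‖(C†) z‖ ≤ c * ‖(A†) z‖) {ε : ℝ} (hε : 0 ≤ ε) {u : F} {g : G}
    (hu : (A ∘L A† + (ε : 𝕜) • (1 : F →L[𝕜] F)) u = C g) :
    ‖(A†) u‖ ≤ c * ‖g‖ := by
  have hquad : ‖(A†) u‖ ^ 2 ≤ re ⟪(A ∘L A† + (ε : 𝕜) • (1 : F →L[𝕜] F)) u, u⟫_𝕜 := by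
    rw [add_apply, inner_add_left, map_add, re_inner_comp_adjoint_apply_self, smul_apply,
      one_apply_eq_self, inner_smul_left, conj_ofReal, re_ofReal_mul, inner_self_eq_norm_sq]
    have : 0 ≤ ε * ‖u‖ ^ 2 := by positivity
    linarith
  have hle : ‖(A†) u‖ ^ 2 ≤ ‖(A†) u‖ * (c * ‖g‖) :=
    calc ‖(A†) u‖ ^ 2 ≤ re ⟪g, (C†) u⟫_𝕜 := by rwa [hu, ← adjoint_inner_right] at hquad
      _ ≤ ‖g‖ * ‖(C†) u‖ := (re_le_norm _).trans (norm_inner_le_norm _ _)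
      _ ≤ ‖g‖ * (c * ‖(A†) u‖) := by gcongr; exact hmaj u
      _ = ‖(A†) u‖ * (c * ‖g‖) := by ring
  nlinarith [norm_nonneg ((A†) u), norm_nonneg g, mul_nonneg hc (norm_nonneg g)]

end ContinuousLinearMap

open ContinuousLinearMap in
theorem regularized_douglas_norm_bound_general
    {H K G : Type*} [NormedAddCommGroup H] [InnerProductSpace ℂ H] [CompleteSpace H]
    [NormedAddCommGroup K] [InnerProductSpace ℂ K] [CompleteSpace K]
    [NormedAddCommGroup G] [InnerProductSpace ℂ G] [CompleteSpace G]
    (A : H →L[ℂ] K) (C : G →L[ℂ] K) (lam : ℝ)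
    (hmaj : ∀ z : K,
      (inner ℂ ((C ∘L C.adjoint) z) z : ℂ).re ≤ lam * (inner ℂ ((A ∘L A.adjoint) z) z : ℂ).re) :
    ∀ ε : ℝ, 0 < ε →
      ‖A.adjoint ∘L Ring.inverse (A ∘L A.adjoint + (ε : ℂ) • (1 : K →L[ℂ] K)) ∘L C‖
        ≤ Real.sqrt lam := by
  intro ε hε
  set T := A ∘L A.adjoint + (ε : ℂ) • (1 : K →L[ℂ] K)
  have hT : T * Ring.inverse T = 1 :=
    Ring.mul_inverse_cancel T ((isPositive_self_comp_adjoint A).isUnit_add_smul_one hε)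
  refine opNorm_le_bound _ (Real.sqrt_nonneg lam) fun g ↦ ?_
  exact norm_adjoint_le_of_add_smul_one_apply_eq (Real.sqrt_nonneg lam)
    (norm_adjoint_apply_le_sqrt_mul (𝕜 := ℂ) hmaj) hε.le (DFunLike.congr_fun hT (C g))

theorem regularized_douglas_norm_bound
    {H K G : Type*} [NormedAddCommGroup H] [InnerProductSpace ℂ H] [CompleteSpace H]
    [NormedAddCommGroup K] [InnerProductSpace ℂ K] [CompleteSpace K]
    [NormedAddCommGroup G] [InnerProductSpace ℂ G] [CompleteSpace G]
    (A : H →L[ℂ] K) (C : G →L[ℂ] K) (lam : ℝ) (hlam : 0 < lam)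
    (hmaj : ∀ z : K,
      (inner ℂ ((C ∘L C.adjoint) z) z : ℂ).re ≤ lam * (inner ℂ ((A ∘L A.adjoint) z) z : ℂ).re) :
    ∀ ε : ℝ, 0 < ε →
      ‖A.adjoint ∘L Ring.inverse (A ∘L A.adjoint + (ε : ℂ) • (1 : K →L[ℂ] K)) ∘L C‖
        ≤ Real.sqrt lam :=
  regularized_douglas_norm_bound_general A C lam hmaj
end

section
/- Let H₁, H₂ be complex Hilbert spaces, A self-adjoint on H₁ with ⟨Ax,x⟩ ≥ a‖x‖² for all x (a > 0), C self-adjoint on H₂ with ⟨Cy,y⟩ ≥ c‖y‖² (c > 0), and B : H₂ → H₁ bounded satisfying |⟨By, x⟩|² ≤ γ ⟨Ax,x⟩ ⟨Cy,y⟩ for all x, y, where 0 ≤ γ < 1. Then the block operator H = [[A, B],[B*, C]] on H₁ ⊕ H₂ satisfies ⟨H(x,y), (x,y)⟩ ≥ (1 − √γ) · min(a, c) · ‖(x,y)‖² for all (x, y). -/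
/-!
Write `p = ⟨Ax, x⟩`, `q = ⟨Cy, y⟩` and `b = re ⟨By, x⟩`. The cross bound gives
`|b| ≤ √γ √(pq)`, and AM–GM `2√(pq) ≤ p + q` turns this into
`p + 2b + q ≥ (1 - √γ)(p + q)`; the diagonal bounds then give `p + q ≥ min a c · ‖(x, y)‖²`.
-/

lemma one_sub_sqrt_mul_add_le {p q b γ : ℝ} (hp : 0 ≤ p) (hq : 0 ≤ q) (hγ : 0 ≤ γ)
    (hb : b ^ 2 ≤ γ * (p * q)) : (1 - √γ) * (p + q) ≤ p + 2 * b + q := by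
  have hb_abs : |b| ≤ √γ * √(p * q) := by
    rw [← Real.sqrt_mul hγ]
    exact Real.abs_le_sqrt hb
  have amgm : 2 * √(p * q) ≤ p + q := by
    rw [Real.sqrt_mul hp]
    nlinarith [sq_nonneg (√p - √q), Real.sq_sqrt hp, Real.sq_sqrt hq]
  nlinarith [neg_abs_le b, Real.sqrt_nonneg γ]

lemma Complex.re_sq_le_norm_sq (z : ℂ) : z.re ^ 2 ≤ ‖z‖ ^ 2 :=
  sq_le_sq.2 ((abs_re_le_norm z).trans_eq (abs_norm z).symm)

theorem block_coercivity_general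
    {H₁ H₂ : Type*} [NormedAddCommGroup H₁] [InnerProductSpace ℂ H₁]
    [NormedAddCommGroup H₂] [InnerProductSpace ℂ H₂]
    (A : H₁ →L[ℂ] H₁) (C : H₂ →L[ℂ] H₂) (B : H₂ →L[ℂ] H₁)
    (a c γ : ℝ) (ha : 0 < a) (hc : 0 < c) (hγ0 : 0 ≤ γ) (hγ1 : γ < 1)
    (hAa : ∀ x : H₁, a * ‖x‖ ^ 2 ≤ (inner ℂ (A x) x : ℂ).re)
    (hCc : ∀ y : H₂, c * ‖y‖ ^ 2 ≤ (inner ℂ (C y) y : ℂ).re)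
    (hcross : ∀ (x : H₁) (y : H₂),
      ‖(inner ℂ (B y) x : ℂ)‖ ^ 2 ≤ γ * ((inner ℂ (A x) x : ℂ).re * (inner ℂ (C y) y : ℂ).re)) :
    ∀ (x : H₁) (y : H₂),
      (1 - Real.sqrt γ) * min a c * (‖x‖ ^ 2 + ‖y‖ ^ 2)
        ≤ (inner ℂ (A x) x : ℂ).re + 2 * (inner ℂ (B y) x : ℂ).re + (inner ℂ (C y) y : ℂ).re := by
  intro x y
  have hp : 0 ≤ (inner ℂ (A x) x : ℂ).re := (mul_nonneg ha.le (sq_nonneg _)).trans (hAa x)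
  have hq : 0 ≤ (inner ℂ (C y) y : ℂ).re := (mul_nonneg hc.le (sq_nonneg _)).trans (hCc y)
  have hdiag : min a c * (‖x‖ ^ 2 + ‖y‖ ^ 2)
      ≤ (inner ℂ (A x) x : ℂ).re + (inner ℂ (C y) y : ℂ).re := by
    rw [mul_add]
    gcongr
    · exact (mul_le_mul_of_nonneg_right (min_le_left a c) (by positivity)).trans (hAa x)
    · exact (mul_le_mul_of_nonneg_right (min_le_right a c) (by positivity)).trans (hCc y)
  have hs : 0 ≤ 1 - √γ := sub_nonneg.2 (Real.sqrt_le_one.2 hγ1.le)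
  calc (1 - √γ) * min a c * (‖x‖ ^ 2 + ‖y‖ ^ 2)
      ≤ (1 - √γ) * ((inner ℂ (A x) x : ℂ).re + (inner ℂ (C y) y : ℂ).re) := by
        rw [mul_assoc]; exact mul_le_mul_of_nonneg_left hdiag hs
    _ ≤ _ := one_sub_sqrt_mul_add_le hp hq hγ0
        ((Complex.re_sq_le_norm_sq _).trans (hcross x y))

theorem block_coercivity
    {H₁ H₂ : Type*} [NormedAddCommGroup H₁] [InnerProductSpace ℂ H₁] [CompleteSpace H₁]
    [NormedAddCommGroup H₂] [InnerProductSpace ℂ H₂] [CompleteSpace H₂]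
    (A : H₁ →L[ℂ] H₁) (C : H₂ →L[ℂ] H₂) (B : H₂ →L[ℂ] H₁)
    (a c γ : ℝ) (ha : 0 < a) (hc : 0 < c) (hγ0 : 0 ≤ γ) (hγ1 : γ < 1)
    (hA : IsSelfAdjoint A) (hC : IsSelfAdjoint C)
    (hAa : ∀ x : H₁, a * ‖x‖ ^ 2 ≤ (inner ℂ (A x) x : ℂ).re)
    (hCc : ∀ y : H₂, c * ‖y‖ ^ 2 ≤ (inner ℂ (C y) y : ℂ).re)
    (hcross : ∀ (x : H₁) (y : H₂),
      ‖(inner ℂ (B y) x : ℂ)‖ ^ 2 ≤ γ * ((inner ℂ (A x) x : ℂ).re * (inner ℂ (C y) y : ℂ).re)) :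
    ∀ (x : H₁) (y : H₂),
      (1 - Real.sqrt γ) * min a c * (‖x‖ ^ 2 + ‖y‖ ^ 2)
        ≤ (inner ℂ (A x) x : ℂ).re + 2 * (inner ℂ (B y) x : ℂ).re + (inner ℂ (C y) y : ℂ).re :=
  block_coercivity_general A C B a c γ ha hc hγ0 hγ1 hAa hCc hcross
end
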